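/- Let V be a type and G a simple graph on V. Suppose (A, B) and (A', B') are two pairs of disjoint nonempty sets of vertices, each pair having union all of V, such that G is a join with respect to (A, B) and also with respect to (A', B'): every vertex of A is adjacent in G to every vertex of B, and every vertex of A' is adjacent in G to every vertex of B'. Suppose moreover that none of the four induced subgraphs G[A], G[B], G[A'], G[B'] is itself a join, i.e., none of A, B, A', B' admits a partition into two nonempty subsets with every vertex of one subset adjacent in G to every vertex of the other. Then the unordered pairs coincide: either A = A' and B = B', or A = B' and B = A'. -/

import Mathlib

/-!
Each side of one join decomposition, not being a join itself, cannot meet both sides of the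
other decomposition: the two traces would split it as a join. So `A` and `B` each lie inside
`A'` or inside `B'`. They cannot lie inside the same one, since `A ∪ B` is everything and the
other side is nonempty; and once `A ⊆ A'`, `B ⊆ B'` (or crosswise), the covering and
disjointness conditions force equality.
-/

section Lattice

variable {α : Type*} [DistribLattice α] [BoundedOrder α] {a b c d : α}

theorem Codisjoint.eq_of_le_of_le_of_disjoint (hab : Codisjoint a b) (hac : a ≤ c) (hbd : b ≤ d)
    (hcd : Disjoint c d) : a = c :=
  le_antisymm hac <| (hcd.mono_right hbd).left_le_of_le_sup_right (le_top.trans hab.eq_top.ge)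

theorem Codisjoint.eq_bot_of_le_of_le_of_disjoint (hab : Codisjoint a b) (hac : a ≤ c)
    (hbc : b ≤ c) (hcd : Disjoint c d) : d = ⊥ :=
  hcd.eq_bot_of_ge <| by rw [codisjoint_self.mp (hab.mono hac hbc)]; exact le_top

end Lattice

namespace SimpleGraph

variable {V : Type*}

/-- The induced subgraph `G[C]` is a join. -/
def IsJoinOn (G : SimpleGraph V) (C : Set V) : Prop :=
  ∃ C₁ C₂ : Set V, Disjoint C₁ C₂ ∧ C₁.Nonempty ∧ C₂.Nonempty ∧
    C₁ ∪ C₂ = C ∧ ∀ a ∈ C₁, ∀ b ∈ C₂, G.Adj a b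

theorem subset_or_subset_of_not_isJoinOn {G : SimpleGraph V} {C A B : Set V}
    (hC : ¬ G.IsJoinOn C) (hCAB : C ⊆ A ∪ B) (hAB : ∀ a ∈ A, ∀ b ∈ B, G.Adj a b) :
    C ⊆ A ∨ C ⊆ B := by
  by_contra! h
  obtain ⟨⟨x, hxC, hxA⟩, ⟨y, hyC, hyB⟩⟩ := h.imp Set.not_subset.mp Set.not_subset.mp
  refine hC ⟨C ∩ A, C \ A, Set.disjoint_sdiff_inter.symm,
    ⟨y, hyC, (hCAB hyC).resolve_right hyB⟩, ⟨x, hxC, hxA⟩, Set.inter_union_sdiff C A, ?_⟩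
  rintro a ⟨-, ha⟩ b ⟨hbC, hbA⟩
  exact hAB a ha b ((hCAB hbC).resolve_left hbA)

end SimpleGraph

theorem join_decomposition_unique_general {V : Type*} (G : SimpleGraph V)
    (A B A' B' : Set V)
    (hcover : A ∪ B = Set.univ)
    (hdisj' : Disjoint A' B') (hA' : A'.Nonempty) (hB' : B'.Nonempty)
    (hcover' : A' ∪ B' = Set.univ)
    (hjoin' : ∀ a ∈ A', ∀ b ∈ B', G.Adj a b)
    (hnotjoin : ∀ C ∈ ({A, B, A', B'} : Set (Set V)),
      ¬ ∃ C₁ C₂ : Set V, Disjoint C₁ C₂ ∧ C₁.Nonempty ∧ C₂.Nonempty ∧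
        C₁ ∪ C₂ = C ∧ ∀ a ∈ C₁, ∀ b ∈ C₂, G.Adj a b) :
    (A = A' ∧ B = B') ∨ (A = B' ∧ B = A') := by
  have hAB : Codisjoint A B := codisjoint_iff.mpr hcover
  have hside {C : Set V} (hC : ¬ G.IsJoinOn C) : C ⊆ A' ∨ C ⊆ B' :=
    G.subset_or_subset_of_not_isJoinOn hC (hcover' ▸ Set.subset_univ C) hjoin'
  rcases hside (hnotjoin A (by simp)) with hAA' | hAB' <;>
    rcases hside (hnotjoin B (by simp)) with hBA' | hBB'
  · exact absurd (hAB.eq_bot_of_le_of_le_of_disjoint hAA' hBA' hdisj') hB'.ne_empty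
  · exact .inl ⟨hAB.eq_of_le_of_le_of_disjoint hAA' hBB' hdisj',
      hAB.symm.eq_of_le_of_le_of_disjoint hBB' hAA' hdisj'.symm⟩
  · exact .inr ⟨hAB.eq_of_le_of_le_of_disjoint hAB' hBA' hdisj'.symm,
      hAB.symm.eq_of_le_of_le_of_disjoint hBA' hAB' hdisj'⟩
  · exact absurd (hAB.eq_bot_of_le_of_le_of_disjoint hAB' hBB' hdisj'.symm) hA'.ne_empty

/-- If a simple graph `G` is a join with respect to two pairs `(A, B)` and
`(A', B')` of disjoint nonempty vertex sets covering `V`, and none of the four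
sets `A`, `B`, `A'`, `B'` itself admits a partition into two nonempty subsets
with all cross-adjacencies present in `G` (i.e. none of the induced subgraphs
is a join), then the unordered pairs coincide. -/
theorem join_decomposition_unique {V : Type*} (G : SimpleGraph V)
    (A B A' B' : Set V)
    (hdisj : Disjoint A B) (hA : A.Nonempty) (hB : B.Nonempty)
    (hcover : A ∪ B = Set.univ)
    (hjoin : ∀ a ∈ A, ∀ b ∈ B, G.Adj a b)
    (hdisj' : Disjoint A' B') (hA' : A'.Nonempty) (hB' : B'.Nonempty)
    (hcover' : A' ∪ B' = Set.univ)
    (hjoin' : ∀ a ∈ A', ∀ b ∈ B', G.Adj a b)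
    (hnotjoin : ∀ C ∈ ({A, B, A', B'} : Set (Set V)),
      ¬ ∃ C₁ C₂ : Set V, Disjoint C₁ C₂ ∧ C₁.Nonempty ∧ C₂.Nonempty ∧
        C₁ ∪ C₂ = C ∧ ∀ a ∈ C₁, ∀ b ∈ C₂, G.Adj a b) :
    (A = A' ∧ B = B') ∨ (A = B' ∧ B = A') :=
  join_decomposition_unique_general G A B A' B' hcover hdisj' hA' hB' hcover' hjoin' hnotjoin
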